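/- Let T be a locally finite face-to-face tiling of Euclidean d-space ℝ^d by convex d-polytopes and let k ≥ 1. If two tiles P and P' of T have isomorphic centered k-th coronas (P, C_k(P)) and (P', C_k(P')), then their centered (k−1)-st coronas (P, C_{k−1}(P)) and (P', C_{k−1}(P')) are also isomorphic; consequently N_{k−1}(T) ≤ N_k(T). -/

import Mathlib

noncomputable section
open scoped Classical

abbrev EucSp (d : ℕ) := EuclideanSpace ℝ (Fin d)

/-- `F` is a face of the convex set `P` (exposed face; includes `∅` and `P` itself). -/
def IsFaceOf {d : ℕ} (F P : Set (EucSp d)) : Prop := IsExposed ℝ P F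

/-- A convex `d`-polytope: the convex hull of a finite point set, with nonempty interior. -/
def IsPolytope (d : ℕ) (P : Set (EucSp d)) : Prop :=
  (∃ s : Finset (EucSp d), P = convexHull ℝ (s : Set (EucSp d))) ∧ (interior P).Nonempty

/-- Affine dimension of a set, the empty set having dimension `-1`. -/
def fdimZ {d : ℕ} (F : Set (EucSp d)) : ℤ :=
  if F = ∅ then -1 else (Module.finrank ℝ (affineSpan ℝ F).direction : ℤ)

/-- A locally finite face-to-face tiling of `ℝ^d` by convex `d`-polytopes. -/
structure Tiling (d : ℕ) where
  tiles : Set (Set (EucSp d))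
  countable : tiles.Countable
  polytope : ∀ P ∈ tiles, IsPolytope d P
  covers : ⋃₀ tiles = Set.univ
  disjointInteriors : ∀ P ∈ tiles, ∀ Q ∈ tiles, P ≠ Q → interior P ∩ interior Q = ∅
  locallyFinite : ∀ x : EucSp d, ∃ U ∈ nhds x, {P | P ∈ tiles ∧ (P ∩ U).Nonempty}.Finite
  faceToFace : ∀ P ∈ tiles, ∀ Q ∈ tiles, IsFaceOf (P ∩ Q) P ∧ IsFaceOf (P ∩ Q) Q

variable {d : ℕ}

/-- A sequence of `n+1` tiles from `P` to `Q` in which any two consecutive tiles meet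
in a face of dimension at least `d - 2`. -/
def TileChain (T : Tiling d) (P Q : Set (EucSp d)) (n : ℕ) : Prop :=
  ∃ f : ℕ → Set (EucSp d), f 0 = P ∧ f n = Q ∧ (∀ j ≤ n, f j ∈ T.tiles) ∧
    ∀ j, 1 ≤ j → j ≤ n → (d : ℤ) - 2 ≤ fdimZ (f (j - 1) ∩ f j)

/-- The distance between two tiles of `T` (`⊤` if they cannot be joined). -/
def tileDist (T : Tiling d) (P Q : Set (EucSp d)) : ℕ∞ :=
  sInf {n : ℕ∞ | ∃ m : ℕ, n = (m : ℕ∞) ∧ TileChain T P Q m}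

/-- The `k`-th corona of `P`: the set of all faces of tiles at distance at most `k` from `P`. -/
def corona (T : Tiling d) (k : ℕ) (P : Set (EucSp d)) : Set (Set (EucSp d)) :=
  {F | ∃ Q ∈ T.tiles, tileDist T P Q ≤ (k : ℕ∞) ∧ IsFaceOf F Q}

/-- The set of all faces of tiles of `T` (the face-lattice of `T`), ordered by inclusion. -/
def facesOf (T : Tiling d) : Set (Set (EucSp d)) :=
  {F | ∃ Q ∈ T.tiles, IsFaceOf F Q}

/-- An order isomorphism between the `k`-th coronas of `P` and `P'` is an isomorphism of
centered coronas when it maps the center `P` to the center `P'`. -/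
def IsCenteredIso (T : Tiling d) (k : ℕ) (P P' : Set (EucSp d))
    (e : ↥(corona T k P) ≃o ↥(corona T k P')) : Prop :=
  ∀ (hP : P ∈ corona T k P) (hP' : P' ∈ corona T k P'), e ⟨P, hP⟩ = ⟨P', hP'⟩

/-- The centered `k`-th coronas `(P, C_k(P))` and `(P', C_k(P'))` are isomorphic. -/
def CoronasIsomorphic (T : Tiling d) (k : ℕ) (P P' : Set (EucSp d)) : Prop :=
  ∃ e : ↥(corona T k P) ≃o ↥(corona T k P'), IsCenteredIso T k P P' e

/-- `N_k(T)`: the number of isomorphism classes of centered `k`-th coronas of tiles of `T`. -/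
def Ncount (T : Tiling d) (k : ℕ) : Cardinal :=
  Cardinal.mk (Quot (fun P Q : ↥T.tiles =>
    CoronasIsomorphic T k (P : Set (EucSp d)) (Q : Set (EucSp d))))

/-- Two tiles are equivalent under the combinatorial automorphism group `Γ(T)`. -/
def TilesEquiv (T : Tiling d) (P Q : Set (EucSp d)) : Prop :=
  ∃ (φ : ↥(facesOf T) ≃o ↥(facesOf T)) (hP : P ∈ facesOf T) (hQ : Q ∈ facesOf T),
    φ ⟨P, hP⟩ = ⟨Q, hQ⟩

/-- The number of orbits of `Γ(T)` on the tiles of `T`. -/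
def orbitCount (T : Tiling d) : Cardinal :=
  Cardinal.mk (Quot (fun P Q : ↥T.tiles =>
    TilesEquiv T (P : Set (EucSp d)) (Q : Set (EucSp d))))

/-- `Γ(C_{k-1}(P)) = Γ(C_k(P))`: every automorphism of the centered `(k-1)`-st corona of `P`
extends to an automorphism of the centered `k`-th corona of `P`. -/
def AutosExtend (T : Tiling d) (k : ℕ) (P : Set (EucSp d)) : Prop :=
  ∀ e : ↥(corona T (k - 1) P) ≃o ↥(corona T (k - 1) P), IsCenteredIso T (k - 1) P P e →
    ∃ f : ↥(corona T k P) ≃o ↥(corona T k P), IsCenteredIso T k P P f ∧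
      ∀ F (hF : F ∈ corona T (k - 1) P) (hF' : F ∈ corona T k P),
        ((f ⟨F, hF'⟩ : Set (EucSp d))) = ((e ⟨F, hF⟩ : Set (EucSp d)))

/-!
An isomorphism of centered `k`-th coronas is an isomorphism of face posets, so it preserves
everything the inclusion order sees: the tiles are the maximal elements, the intersection of two
tiles is their meet, and two tiles `R`, `Q` meet in a face of dimension at least `d - 2` exactly
when there is no chain `R ∩ Q ⊂ G₁ ⊂ G₂ ⊂ Q` of faces. The last point holds because between a
face of codimension at least `2` of a polytope and the polytope itself there is always a third
face, exposed by tilting a supporting functional. Hence the isomorphism maps a chain of adjacent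
tiles starting at `P` to one starting at `P'`, so it maps tiles at distance `≤ j` from `P` to
tiles at distance `≤ j` from `P'` and restricts to an isomorphism of centered `j`-th coronas
for every `j ≤ k`.
-/

open Filter Topology

theorem vectorSpan_le_ker {k V M : Type*} [Ring k] [AddCommGroup V] [Module k V] [AddCommGroup M]
    [Module k M] {A : Set V} {f : V →ₗ[k] M} (hA : ∀ x ∈ A, ∀ y ∈ A, f x = f y) :
    vectorSpan k A ≤ LinearMap.ker f :=
  Submodule.span_le.2 <| by
    rintro _ ⟨x, hx, y, hy, rfl⟩
    simp [vsub_eq_sub, hA x hx y hy]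

theorem Submodule.exists_ne_zero_mem_ker {K E : Type*} [Field K] [AddCommGroup E] [Module K E]
    {U : Submodule K E} [FiniteDimensional K U] (hU : 2 ≤ Module.finrank K U) (f : E →ₗ[K] K) :
    ∃ w ∈ U, w ≠ 0 ∧ f w = 0 := by
  have hrange : Module.finrank K (LinearMap.range (f.domRestrict U)) ≤ 1 :=
    (Submodule.finrank_le _).trans (Module.finrank_self K).le
  have hker : 0 < Module.finrank K (LinearMap.ker (f.domRestrict U)) := by
    have := LinearMap.finrank_range_add_finrank_ker (f.domRestrict U)
    omega
  obtain ⟨⟨⟨w, hwU⟩, hw⟩, hne⟩ := Module.finrank_pos_iff_exists_ne_zero.1 hker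
  exact ⟨w, hwU, fun h => hne (by simp [h]), hw⟩

section ConvexPolytope

variable {E : Type*} [NormedAddCommGroup E] [NormedSpace ℝ E] {s A F G : Set E} {x : E}

theorem mem_toExposed_convexHull_iff (l : StrongDual ℝ E) :
    x ∈ l.toExposed (convexHull ℝ s) ↔ x ∈ convexHull ℝ s ∧ ∀ v ∈ s, l v ≤ l x :=
  and_congr_right fun _ =>
    ⟨fun h v hv => h v (subset_convexHull ℝ s hv),
      fun h _ hy => convexHull_min h (convex_halfSpace_le l.toLinearMap.isLinear (l x)) hy⟩

/-- By Krein–Milman, `F` is the closed convex hull of its extreme points, which lie in `s`. -/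
theorem IsExposed.eq_convexHull_inter (hs : s.Finite) (hF : IsExposed ℝ (convexHull ℝ s) F) :
    F = convexHull ℝ (s ∩ F) := by
  have hFc : IsCompact F := hF.isCompact (hs.isCompact_convexHull ℝ)
  have hFconv : Convex ℝ F := hF.convex (convex_convexHull ℝ s)
  refine subset_antisymm ?_ (convexHull_min Set.inter_subset_right hFconv)
  have hext : F.extremePoints ℝ ⊆ s ∩ F := fun x hx =>
    ⟨extremePoints_convexHull_subset (𝕜 := ℝ)
      (hF.isExtreme.extremePoints_subset_extremePoints hx), hx.1⟩
  calc F = closure (convexHull ℝ (F.extremePoints ℝ)) :=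
        (closure_convexHull_extremePoints hFc hFconv).symm
    _ ⊆ closure (convexHull ℝ (s ∩ F)) := closure_mono (convexHull_mono (𝕜 := ℝ) hext)
    _ = convexHull ℝ (s ∩ F) := ((hs.inter_of_left F).isCompact_convexHull ℝ).isClosed.closure_eq

/-- `G` is exposed by the functional exposing `A`, tilted by a small multiple of the one
exposing `G` inside `A`. -/
theorem IsExposed.trans_convexHull (hs : s.Finite) (hA : IsExposed ℝ (convexHull ℝ s) A)
    (hG : IsExposed ℝ A G) : IsExposed ℝ (convexHull ℝ s) G := by
  rintro ⟨g, hg⟩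
  obtain ⟨l, rfl⟩ := hA ⟨g, hG.subset hg⟩
  obtain ⟨m, rfl⟩ := hG ⟨g, hg⟩
  set A := l.toExposed (convexHull ℝ s)
  have hgA : g ∈ A := hg.1
  have hlA : ∀ y ∈ A, l y = l g := fun y hy => le_antisymm (hgA.2 y hy.1) (hy.2 g hgA.1)
  have hlt : ∀ v ∈ s, v ∉ A → l v < l g := fun v hv hvA =>
    (hgA.2 v (subset_convexHull ℝ s hv)).lt_of_ne fun h =>
      hvA ⟨subset_convexHull ℝ s hv, fun y hy => h ▸ hgA.2 y hy⟩
  have hsmall : ∀ᶠ ε in 𝓝 (0 : ℝ), ∀ v ∈ s, v ∉ A → l v + ε * m v < l g + ε * m g := by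
    refine (eventually_all_finite hs).2 fun v hv => ?_
    by_cases hvA : v ∈ A
    · exact Eventually.of_forall fun _ h => absurd hvA h
    have hcont : ∀ w : E, Tendsto (fun ε : ℝ => l w + ε * m w) (𝓝 0) (𝓝 (l w)) := fun w =>
      (by fun_prop : Continuous fun ε : ℝ => l w + ε * m w).tendsto' 0 (l w) (by simp)
    exact ((hcont v).eventually_lt (hcont g) (hlt v hv hvA)).mono fun _ h _ => h
  obtain ⟨ε, hε, hεpos⟩ :=
    ((hsmall.filter_mono nhdsWithin_le_nhds).and (self_mem_nhdsWithin (s := Set.Ioi 0))).exists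
  set L := l + ε • m
  have hL : ∀ y, L y = l y + ε * m y := fun y => by simp [L]
  have hLv : ∀ v ∈ s, L v ≤ L g := fun v hv => by
    by_cases hvA : v ∈ A
    · rw [hL, hL, hlA v hvA]
      nlinarith [hg.2 v hvA]
    · rw [hL, hL]; exact (hε v hv hvA).le
  refine ⟨L, subset_antisymm (fun x hx => ?_) (fun x hx => ?_)⟩
  · have hmx : m x = m g := le_antisymm (hg.2 x hx.1) (hx.2 g hgA)
    have hLx : L x = L g := by rw [hL, hL, hlA x hx.1, hmx]
    exact (mem_toExposed_convexHull_iff L).2 ⟨hx.1.1, fun v hv => hLx ▸ hLv v hv⟩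
  · have hH : IsExposed ℝ (convexHull ℝ s) (L.toExposed (convexHull ℝ s)) :=
      ContinuousLinearMap.toExposed.isExposed
    have hGconv : Convex ℝ (m.toExposed A) :=
      ContinuousLinearMap.toExposed.isExposed.convex
        (ContinuousLinearMap.toExposed.isExposed.convex (convex_convexHull ℝ s))
    have hvert : s ∩ L.toExposed (convexHull ℝ s) ⊆ m.toExposed A := by
      rintro v ⟨hv, hvH⟩
      have hgv : L g ≤ L v := hvH.2 g hgA.1
      have hvA : v ∈ A := by_contra fun hvA => (hε v hv hvA).not_ge (by rwa [hL, hL] at hgv)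
      rw [hL, hL, hlA v hvA] at hgv
      have hmv : m g ≤ m v := le_of_mul_le_mul_left (by linarith) hεpos
      exact ⟨hvA, fun y hy => (hg.2 y hy).trans hmv⟩
    have hxH : x ∈ L.toExposed (convexHull ℝ s) := hx
    rw [hH.eq_convexHull_inter hs] at hxH
    exact convexHull_min hvert hGconv hxH

theorem exists_pos_ssubset_toExposed_add_smul (hs : s.Finite) {l m : StrongDual ℝ E} {μ : ℝ}
    (hF : (l.toExposed (convexHull ℝ s)).Nonempty)
    (hm : ∀ x ∈ l.toExposed (convexHull ℝ s), m x = μ) (hv : ∃ v ∈ s, μ < m v) :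
    ∃ t : ℝ, 0 < t ∧ l.toExposed (convexHull ℝ s) ⊂ (l + t • m).toExposed (convexHull ℝ s) := by
  obtain ⟨f, hf⟩ := hF
  have hlv : ∀ v ∈ s, l v ≤ l f := fun v hv => hf.2 v (subset_convexHull ℝ s hv)
  have hlt : ∀ v ∈ s, μ < m v → l v < l f := fun v hv hmv =>
    (hlv v hv).lt_of_ne fun h =>
      hmv.ne' (hm v ⟨subset_convexHull ℝ s hv, fun y hy => h ▸ hf.2 y hy⟩)
  -- The critical tilt: the first `t` at which a new vertex `u` enters the exposed face.
  obtain ⟨u, ⟨hu, hmu⟩, hmin⟩ := Set.exists_min_image {v ∈ s | μ < m v}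
    (fun v => (l f - l v) / (m v - μ)) (hs.subset (Set.sep_subset _ _)) hv
  set t := (l f - l u) / (m u - μ)
  have ht : 0 < t := div_pos (sub_pos.2 (hlt u hu hmu)) (sub_pos.2 hmu)
  have hL : ∀ y, (l + t • m) y = l y + t * m y := fun y => by simp
  have hLv : ∀ v ∈ s, l v + t * m v ≤ l f + t * μ := fun v hv => by
    rcases lt_or_ge μ (m v) with hmv | hmv
    · have := hmin v ⟨hv, hmv⟩
      rw [le_div_iff₀ (sub_pos.2 hmv)] at this
      nlinarith
    · nlinarith [hlv v hv]
  have hLu : l u + t * m u = l f + t * μ := by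
    have : t * (m u - μ) = l f - l u := div_mul_cancel₀ _ (sub_pos.2 hmu).ne'
    linarith
  refine ⟨t, ht, (Set.ssubset_iff_of_subset fun x hx => ?_).2
    ⟨u, ?_, fun huF => hmu.ne' (hm u huF)⟩⟩
  · have hlx : l x = l f := le_antisymm (hf.2 x hx.1) (hx.2 f hf.1)
    refine (mem_toExposed_convexHull_iff _).2 ⟨hx.1, fun v hv => ?_⟩
    rw [hL, hL, hlx, hm x hx]
    exact hLv v hv
  · refine (mem_toExposed_convexHull_iff _).2 ⟨subset_convexHull ℝ s hu, fun v hv => ?_⟩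
    rw [hL, hL, hLu]
    exact hLv v hv

theorem IsExposed.affineSpan_lt {P : Set E} (hF : IsExposed ℝ P F) (hFne : F.Nonempty)
    (hFG : F ⊂ G) (hGP : G ⊆ P) : affineSpan ℝ F < affineSpan ℝ G := by
  obtain ⟨l, rfl⟩ := hF hFne
  obtain ⟨f, hf⟩ := hFne
  obtain ⟨y, hyG, hyF⟩ := Set.exists_of_ssubset hFG
  refine (affineSpan_mono ℝ hFG.subset).lt_of_ne fun h => hyF ?_
  have hconst : ∀ x ∈ l.toExposed P, ∀ x' ∈ l.toExposed P, (l : E →ₗ[ℝ] ℝ) x = l x' :=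
    fun x hx x' hx' => le_antisymm (hx'.2 x hx.1) (hx.2 x' hx'.1)
  have hyf : y -ᵥ f ∈ vectorSpan ℝ (l.toExposed P) := by
    rw [← direction_affineSpan]
    exact AffineSubspace.vsub_mem_direction (h ▸ subset_affineSpan ℝ G hyG)
      (subset_affineSpan ℝ _ hf)
  have hly : l y = l f := by simpa [sub_eq_zero] using vectorSpan_le_ker hconst hyf
  exact ⟨hGP hyG, fun z hz => hly ▸ hf.2 z hz⟩

theorem ContinuousLinearMap.toExposed_ssubset {P : Set E} (L : StrongDual ℝ E) {w : E}
    (hw : w ∈ (affineSpan ℝ P).direction) (hLw : L w ≠ 0) : L.toExposed P ⊂ P := by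
  refine ssubset_of_subset_of_ne (Set.sep_subset _ _) fun h => hLw ?_
  have hmax : ∀ x ∈ P, ∀ y ∈ P, L y ≤ L x := fun x hx => (h.symm ▸ hx : x ∈ L.toExposed P).2
  exact vectorSpan_le_ker (f := (L : E →ₗ[ℝ] ℝ)) (fun x hx y hy => le_antisymm (hmax y hy x hx)
    (hmax x hx y hy)) (by rwa [← direction_affineSpan])

end ConvexPolytope

section InnerProductSpace

variable {E : Type*} [NormedAddCommGroup E] [InnerProductSpace ℝ E] [FiniteDimensional ℝ E]
  {V F : Set E}

theorem exists_isExposed_nonempty_ssubset (hV : V.Finite)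
    (hdim : 0 < Module.finrank ℝ (affineSpan ℝ (convexHull ℝ V)).direction) :
    ∃ G, IsExposed ℝ (convexHull ℝ V) G ∧ G.Nonempty ∧ G ⊂ convexHull ℝ V := by
  rcases V.eq_empty_or_nonempty with rfl | hVne
  · rw [convexHull_empty, AffineSubspace.span_empty, AffineSubspace.direction_bot,
      finrank_bot] at hdim
    exact absurd hdim (lt_irrefl 0)
  obtain ⟨⟨w, hwW⟩, hw⟩ := Module.finrank_pos_iff_exists_ne_zero.1 hdim
  obtain ⟨x, hxP, hxmax⟩ := (hV.isCompact_convexHull ℝ).exists_isMaxOn (hVne.convexHull (𝕜 := ℝ))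
    (innerSL ℝ w).continuous.continuousOn
  refine ⟨_, ContinuousLinearMap.toExposed.isExposed, ⟨x, hxP, hxmax⟩,
    (innerSL ℝ w).toExposed_ssubset hwW ?_⟩
  simpa using fun h : w = 0 => hw (Subtype.ext h)

open scoped RealInnerProductSpace in
/-- The new face is exposed by tilting a functional `l` exposing `F` towards a direction `w` of
the polytope that is orthogonal to `F` and lies in the kernel of `l`. -/
theorem exists_isExposed_between_of_nonempty (hV : V.Finite)
    (hF : IsExposed ℝ (convexHull ℝ V) F) (hFne : F.Nonempty)
    (hdim : Module.finrank ℝ (affineSpan ℝ F).direction + 2 ≤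
      Module.finrank ℝ (affineSpan ℝ (convexHull ℝ V)).direction) :
    ∃ G, IsExposed ℝ (convexHull ℝ V) G ∧ F ⊂ G ∧ G ⊂ convexHull ℝ V := by
  obtain ⟨l, hl⟩ := hF hFne
  change F = l.toExposed (convexHull ℝ V) at hl
  subst hl
  have hrank := Submodule.finrank_add_inf_finrank_orthogonal
    (AffineSubspace.direction_le (affineSpan_mono ℝ hF.subset))
  obtain ⟨w, ⟨hwF, hwP⟩, hw0, hlw⟩ :=
    Submodule.exists_ne_zero_mem_ker (le_of_add_le_add_left (hdim.trans hrank.ge)) l.toLinearMap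
  set m := innerSL ℝ w
  have htilt : ∀ t : ℝ, t ≠ 0 → (l + t • m) w ≠ 0 := fun t ht => by
    simpa [m, show l w = 0 from hlw] using ⟨ht, hw0⟩
  obtain ⟨f, hf⟩ := hFne
  have hmF : ∀ x ∈ l.toExposed (convexHull ℝ V), m x = m f := fun x hx => by
    have := (Submodule.mem_orthogonal _ w).1 hwF _ <|
      AffineSubspace.vsub_mem_direction (subset_affineSpan ℝ _ hx) (subset_affineSpan ℝ _ hf)
    simp only [m, innerSL_apply_apply, vsub_eq_sub, real_inner_comm, inner_sub_right] at this ⊢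
    linarith
  obtain ⟨v, hv, hmv⟩ : ∃ v ∈ V, m v ≠ m f := by
    by_contra! h
    have hmw : m w = 0 := by
      refine vectorSpan_le_ker (f := (m : E →ₗ[ℝ] ℝ))
        (fun x hx y hy => (h x hx).trans (h y hy).symm) ?_
      rwa [← direction_affineSpan, ← affineSpan_convexHull]
    exact htilt 1 one_ne_zero (by simpa [show l w = 0 from hlw] using hmw)
  rcases hmv.lt_or_gt with hlt | hlt
  · obtain ⟨t, ht, hFG⟩ := exists_pos_ssubset_toExposed_add_smul hV ⟨f, hf⟩ (m := -m)
      (fun x hx => by simp [hmF x hx]) ⟨v, hv, neg_lt_neg hlt⟩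
    rw [smul_neg, ← neg_smul] at hFG
    exact ⟨_, ContinuousLinearMap.toExposed.isExposed, hFG,
      ContinuousLinearMap.toExposed_ssubset _ hwP (htilt _ (neg_ne_zero.2 ht.ne'))⟩
  · obtain ⟨t, ht, hFG⟩ := exists_pos_ssubset_toExposed_add_smul hV ⟨f, hf⟩ hmF ⟨v, hv, hlt⟩
    exact ⟨_, ContinuousLinearMap.toExposed.isExposed, hFG,
      ContinuousLinearMap.toExposed_ssubset _ hwP (htilt _ ht.ne')⟩

end InnerProductSpace

section FaceDimension

theorem fdimZ_of_nonempty {F : Set (EucSp d)} (hF : F.Nonempty) :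
    fdimZ F = Module.finrank ℝ (affineSpan ℝ F).direction :=
  if_neg hF.ne_empty

theorem fdimZ_empty : fdimZ (∅ : Set (EucSp d)) = -1 := if_pos rfl

theorem neg_one_le_fdimZ (F : Set (EucSp d)) : -1 ≤ fdimZ F := by
  rcases F.eq_empty_or_nonempty with rfl | hF
  · rw [fdimZ_empty]
  · rw [fdimZ_of_nonempty hF]; omega

theorem IsExposed.fdimZ_lt {P F G : Set (EucSp d)} (hF : IsExposed ℝ P F) (hFG : F ⊂ G)
    (hGP : G ⊆ P) : fdimZ F < fdimZ G := by
  obtain ⟨y, hyG, -⟩ := Set.exists_of_ssubset hFG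
  rw [fdimZ_of_nonempty ⟨y, hyG⟩]
  rcases F.eq_empty_or_nonempty with rfl | hFne
  · rw [fdimZ_empty]; omega
  · rw [fdimZ_of_nonempty hFne]
    exact_mod_cast Submodule.finrank_lt_finrank_of_lt <| AffineSubspace.direction_lt_of_nonempty
      (hF.affineSpan_lt hFne hFG hGP) ((affineSpan_nonempty ℝ).2 hFne)

theorem exists_isExposed_between {V F : Set (EucSp d)} (hV : V.Finite)
    (hF : IsExposed ℝ (convexHull ℝ V) F) (hdim : fdimZ F + 2 ≤ fdimZ (convexHull ℝ V)) :
    ∃ G, IsExposed ℝ (convexHull ℝ V) G ∧ F ⊂ G ∧ G ⊂ convexHull ℝ V := by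
  have hPne : (convexHull ℝ V).Nonempty := Set.nonempty_iff_ne_empty.2 fun h => by
    rw [h, fdimZ_empty] at hdim; linarith [neg_one_le_fdimZ F]
  rw [fdimZ_of_nonempty hPne] at hdim
  rcases F.eq_empty_or_nonempty with rfl | hFne
  · rw [fdimZ_empty] at hdim
    obtain ⟨G, hG, hGne, hGP⟩ := exists_isExposed_nonempty_ssubset hV (by omega)
    exact ⟨G, hG, Set.empty_ssubset.2 hGne, hGP⟩
  · rw [fdimZ_of_nonempty hFne] at hdim
    exact exists_isExposed_between_of_nonempty hV hF hFne (by omega)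

theorem exists_isExposed_chain {V F : Set (EucSp d)} (hV : V.Finite)
    (hF : IsExposed ℝ (convexHull ℝ V) F) (hdim : fdimZ F + 3 ≤ fdimZ (convexHull ℝ V)) :
    ∃ G₁ G₂, IsExposed ℝ (convexHull ℝ V) G₁ ∧ IsExposed ℝ (convexHull ℝ V) G₂ ∧
      F ⊂ G₁ ∧ G₁ ⊂ G₂ ∧ G₂ ⊂ convexHull ℝ V := by
  obtain ⟨G, hG, hFG, hGP⟩ := exists_isExposed_between hV hF (by omega)
  by_cases hGdim : fdimZ G + 2 ≤ fdimZ (convexHull ℝ V)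
  · obtain ⟨G₂, hG₂, hGG₂, hG₂P⟩ := exists_isExposed_between hV hG hGdim
    exact ⟨G, G₂, hG, hG₂, hFG, hGG₂, hG₂P⟩
  · have hFGdim : fdimZ F + 2 ≤ fdimZ G := by omega
    have hFG' : IsExposed ℝ G F := hF.mono hG.subset hFG.subset
    have hGeq := hG.eq_convexHull_inter hV
    rw [hGeq] at hFG' hFGdim
    obtain ⟨G₁, hG₁, hFG₁, hG₁G⟩ := exists_isExposed_between (hV.inter_of_left G) hFG' hFGdim
    rw [← hGeq] at hG₁ hG₁G
    exact ⟨G₁, G, hG.trans_convexHull hV hG₁, hG, hFG₁, hG₁G, hGP⟩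

end FaceDimension

namespace Tiling

variable (T : Tiling d) {Q R F : Set (EucSp d)}

theorem fdimZ_of_mem (hQ : Q ∈ T.tiles) : fdimZ Q = d := by
  obtain ⟨⟨V, rfl⟩, hint⟩ := T.polytope Q hQ
  rw [fdimZ_of_nonempty (hint.mono interior_subset),
    (convex_convexHull ℝ _).interior_nonempty_iff_affineSpan_eq_top.1 hint,
    AffineSubspace.direction_top, finrank_top, finrank_euclideanSpace_fin]

theorem eq_of_subset (hQ : Q ∈ T.tiles) (hR : R ∈ T.tiles) (h : Q ⊆ R) : Q = R := by
  by_contra hne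
  obtain ⟨x, hx⟩ := (T.polytope Q hQ).2
  exact (T.disjointInteriors Q hQ R hR hne).subset ⟨hx, interior_mono h hx⟩

theorem isFaceOf_of_subset (hQ : Q ∈ T.tiles) (hFQ : IsFaceOf F Q) (hR : R ∈ T.tiles)
    (hFR : F ⊆ R) : IsFaceOf F R := by
  obtain ⟨⟨V, rfl⟩, -⟩ := T.polytope R hR
  exact (T.faceToFace Q hQ _ hR).2.trans_convexHull V.finite_toSet
    (hFQ.mono Set.inter_subset_left (Set.subset_inter hFQ.subset hFR))

end Tiling

section TileDistance

variable {T : Tiling d} {P Q : Set (EucSp d)} {n k : ℕ}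

theorem TileChain.mem_tiles (h : TileChain T P Q n) : Q ∈ T.tiles := by
  obtain ⟨f, -, rfl, hf, -⟩ := h
  exact hf n le_rfl

theorem tileChain_zero_iff : TileChain T P Q 0 ↔ Q = P ∧ P ∈ T.tiles := by
  refine ⟨fun ⟨f, h0, h1, hf, _⟩ => ⟨h1.symm.trans h0, h0 ▸ hf 0 le_rfl⟩, ?_⟩
  rintro ⟨rfl, hQ⟩
  exact ⟨fun _ => Q, rfl, rfl, fun _ _ => hQ, fun j h1 h2 => by omega⟩

theorem tileChain_succ_iff :
    TileChain T P Q (n + 1) ↔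
      Q ∈ T.tiles ∧ ∃ R, TileChain T P R n ∧ (d : ℤ) - 2 ≤ fdimZ (R ∩ Q) := by
  constructor
  · rintro ⟨f, h0, rfl, hf, hadj⟩
    exact ⟨hf _ le_rfl, f n, ⟨f, h0, rfl, fun j hj => hf j (by omega), fun j h1 h2 =>
      hadj j h1 (by omega)⟩, hadj (n + 1) (by omega) le_rfl⟩
  · rintro ⟨hQ, R, ⟨f, h0, rfl, hf, hadj⟩, hRQ⟩
    refine ⟨fun j => if j ≤ n then f j else Q, by simpa using h0, by simp, fun j hj => ?_,
      fun j h1 h2 => ?_⟩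
    · dsimp only
      split_ifs with h
      exacts [hf j h, hQ]
    · rcases (Nat.lt_or_ge j (n + 1)) with hj | hj
      · simpa [show j ≤ n by omega, show j - 1 ≤ n by omega] using hadj j h1 (by omega)
      · simpa [show j = n + 1 by omega] using hRQ

theorem tileDist_le_iff : tileDist T P Q ≤ k ↔ ∃ m ≤ k, TileChain T P Q m := by
  refine ⟨fun h => ?_, fun ⟨m, hm, hc⟩ =>
    (sInf_le (s := {n : ℕ∞ | ∃ m : ℕ, n = m ∧ TileChain T P Q m}) ⟨m, rfl, hc⟩).trans
      (by exact_mod_cast hm)⟩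
  rcases Set.eq_empty_or_nonempty {n : ℕ∞ | ∃ m : ℕ, n = m ∧ TileChain T P Q m} with hS | hS
  · rw [tileDist, hS, sInf_empty, top_le_iff] at h
    exact absurd h (ENat.natCast_ne_top k)
  · obtain ⟨m, hm, hc⟩ := csInf_mem hS
    rw [tileDist, hm] at h
    exact ⟨m, by exact_mod_cast h, hc⟩

theorem tileDist_le_zero_iff : tileDist T P Q ≤ (0 : ℕ) ↔ Q = P ∧ P ∈ T.tiles := by
  rw [tileDist_le_iff]
  refine ⟨fun ⟨m, hm, hc⟩ => ?_, fun h => ⟨0, le_rfl, tileChain_zero_iff.2 h⟩⟩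
  obtain rfl : m = 0 := by omega
  exact tileChain_zero_iff.1 hc

theorem tileDist_le_succ_iff :
    tileDist T P Q ≤ (k + 1 : ℕ) ↔ tileDist T P Q ≤ k ∨
      Q ∈ T.tiles ∧ ∃ R, tileDist T P R ≤ k ∧ (d : ℤ) - 2 ≤ fdimZ (R ∩ Q) := by
  simp only [tileDist_le_iff]
  constructor
  · rintro ⟨m, hm, hc⟩
    rcases Nat.lt_or_ge m (k + 1) with hlt | hge
    · exact Or.inl ⟨m, by omega, hc⟩
    · obtain rfl : m = k + 1 := by omega
      obtain ⟨hQ, R, hR, hRQ⟩ := tileChain_succ_iff.1 hc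
      exact Or.inr ⟨hQ, R, ⟨k, le_rfl, hR⟩, hRQ⟩
  · rintro (⟨m, hm, hc⟩ | ⟨hQ, R, ⟨m, hm, hR⟩, hRQ⟩)
    · exact ⟨m, by omega, hc⟩
    · exact ⟨m + 1, by omega, tileChain_succ_iff.2 ⟨hQ, R, hR, hRQ⟩⟩

theorem mem_tiles_of_tileDist_le (h : tileDist T P Q ≤ k) : Q ∈ T.tiles :=
  let ⟨_, _, hc⟩ := tileDist_le_iff.1 h
  hc.mem_tiles

end TileDistance

theorem isGLB_pair_inter {α : Type*} {S : Set (Set α)} {A B : Set α} (hA : A ∈ S) (hB : B ∈ S)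
    (hAB : A ∩ B ∈ S) : IsGLB ({⟨A, hA⟩, ⟨B, hB⟩} : Set S) ⟨A ∩ B, hAB⟩ := by
  refine ⟨?_, fun C hC =>
    Set.subset_inter (hC (Set.mem_insert _ _)) (hC (Set.mem_insert_of_mem _ rfl))⟩
  rintro C (rfl | rfl)
  exacts [Set.inter_subset_left, Set.inter_subset_right]

section Corona

variable {T : Tiling d} {P Q F : Set (EucSp d)} {j k : ℕ}

theorem corona_mono (hjk : j ≤ k) : corona T j P ⊆ corona T k P :=
  fun _ ⟨Q, hQ, hd, hF⟩ => ⟨Q, hQ, hd.trans (by exact_mod_cast hjk), hF⟩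

theorem mem_corona_iff_of_mem_tiles (hQ : Q ∈ T.tiles) :
    Q ∈ corona T k P ↔ tileDist T P Q ≤ k :=
  ⟨fun ⟨_, hR, hd, hQR⟩ => T.eq_of_subset hQ hR hQR.subset ▸ hd,
    fun hd => ⟨Q, hQ, hd, IsExposed.refl Q⟩⟩

theorem mem_corona_self (hP : P ∈ T.tiles) : P ∈ corona T k P :=
  (mem_corona_iff_of_mem_tiles hP).2 <|
    (tileDist_le_zero_iff.2 ⟨rfl, hP⟩).trans (by exact_mod_cast Nat.zero_le k)

theorem isFaceOf_of_mem_corona (hF : F ∈ corona T k P) (hQ : Q ∈ T.tiles) (hFQ : F ⊆ Q) :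
    IsFaceOf F Q :=
  let ⟨_, hR, _, hFR⟩ := hF
  T.isFaceOf_of_subset hR hFR hQ hFQ

theorem isMax_iff_mem_tiles (x : corona T k P) : IsMax x ↔ (x : Set (EucSp d)) ∈ T.tiles := by
  obtain ⟨F, hFc⟩ := x
  refine ⟨fun h => ?_, fun hF ⟨G, R, hR, _, hGR⟩ hFG => ?_⟩
  · obtain ⟨Q, hQ, hd, hFQ⟩ := hFc
    have hQF : Q ⊆ F := h (show (⟨F, _⟩ : corona T k P) ≤ ⟨Q, Q, hQ, hd, IsExposed.refl Q⟩
      from hFQ.subset)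
    exact (subset_antisymm hFQ.subset hQF) ▸ hQ
  · have hFR : F = R := T.eq_of_subset hF hR ((show F ⊆ G from hFG).trans hGR.subset)
    exact hFR ▸ hGR.subset

theorem le_fdimZ_iff_not_exists_chain (hQ : Q ∈ T.tiles) (hFQ : IsFaceOf F Q)
    (hFc : F ∈ corona T k P) (hQc : Q ∈ corona T k P) :
    (d : ℤ) - 2 ≤ fdimZ F ↔
      ¬∃ G₁ G₂ : corona T k P, ⟨F, hFc⟩ < G₁ ∧ G₁ < G₂ ∧ G₂ < ⟨Q, hQc⟩ := by
  constructor
  · rintro hdim ⟨⟨G₁, hG₁⟩, ⟨G₂, hG₂⟩, h₁, h₂, h₃⟩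
    have hFG₁ : F ⊂ G₁ := h₁
    have hG₁G₂ : G₁ ⊂ G₂ := h₂
    have hG₂Q : G₂ ⊂ Q := h₃
    have hG₁Q : IsFaceOf G₁ Q := isFaceOf_of_mem_corona hG₁ hQ (hG₁G₂.subset.trans hG₂Q.subset)
    have := hFQ.fdimZ_lt hFG₁ hG₁Q.subset
    have := hG₁Q.fdimZ_lt hG₁G₂ hG₂Q.subset
    have := (isFaceOf_of_mem_corona hG₂ hQ hG₂Q.subset).fdimZ_lt hG₂Q subset_rfl
    have := T.fdimZ_of_mem hQ
    omega
  · intro hchain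
    by_contra! hdim
    obtain ⟨⟨V, rfl⟩, -⟩ := T.polytope _ hQ
    obtain ⟨G₁, G₂, hG₁, hG₂, h₁, h₂, h₃⟩ :=
      exists_isExposed_chain V.finite_toSet hFQ (by rw [T.fdimZ_of_mem hQ]; omega)
    have hQd := (mem_corona_iff_of_mem_tiles hQ).1 hQc
    exact hchain ⟨⟨G₁, _, hQ, hQd, hG₁⟩, ⟨G₂, _, hQ, hQd, hG₂⟩, h₁, h₂, h₃⟩

end Corona

section CoronaIso

variable {T : Tiling d} {j k : ℕ} {P P' Q R F : Set (EucSp d)}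
  (e : corona T k P ≃o corona T k P')

theorem inter_mem_corona (hR : R ∈ T.tiles) (hQ : Q ∈ T.tiles) (hQc : Q ∈ corona T k P) :
    R ∩ Q ∈ corona T k P :=
  ⟨Q, hQ, (mem_corona_iff_of_mem_tiles hQ).1 hQc, (T.faceToFace R hR Q hQ).2⟩

theorem mem_tiles_map (hQ : Q ∈ T.tiles) (hQc : Q ∈ corona T k P) :
    (e ⟨Q, hQc⟩ : Set (EucSp d)) ∈ T.tiles :=
  (isMax_iff_mem_tiles _).1 (e.isMax_apply.2 ((isMax_iff_mem_tiles ⟨Q, hQc⟩).2 hQ))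

theorem coe_map_inter (hR : R ∈ T.tiles) (hQ : Q ∈ T.tiles) (hRc : R ∈ corona T k P)
    (hQc : Q ∈ corona T k P) :
    (e ⟨R ∩ Q, inter_mem_corona hR hQ hQc⟩ : Set (EucSp d)) =
      (e ⟨R, hRc⟩ : Set (EucSp d)) ∩ (e ⟨Q, hQc⟩ : Set (EucSp d)) := by
  have hglb := e.isGLB_image'.2 (isGLB_pair_inter hRc hQc (inter_mem_corona hR hQ hQc))
  rw [Set.image_pair] at hglb
  exact congrArg Subtype.val <| hglb.unique <| isGLB_pair_inter _ _ <|
    inter_mem_corona (mem_tiles_map e hR hRc) (mem_tiles_map e hQ hQc) (e ⟨Q, hQc⟩).2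

theorem le_fdimZ_inter_map (hR : R ∈ T.tiles) (hQ : Q ∈ T.tiles) (hRc : R ∈ corona T k P)
    (hQc : Q ∈ corona T k P) (hRQ : (d : ℤ) - 2 ≤ fdimZ (R ∩ Q)) :
    (d : ℤ) - 2 ≤ fdimZ ((e ⟨R, hRc⟩ : Set (EucSp d)) ∩ (e ⟨Q, hQc⟩ : Set (EucSp d))) := by
  have hR' := mem_tiles_map e hR hRc
  have hQ' := mem_tiles_map e hQ hQc
  rw [le_fdimZ_iff_not_exists_chain hQ (T.faceToFace R hR Q hQ).2
    (inter_mem_corona hR hQ hQc) hQc] at hRQ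
  rw [le_fdimZ_iff_not_exists_chain hQ' (T.faceToFace _ hR' _ hQ').2
    (inter_mem_corona hR' hQ' (e ⟨Q, hQc⟩).2) (e ⟨Q, hQc⟩).2]
  rintro ⟨G₁, G₂, h₁, h₂, h₃⟩
  refine hRQ ⟨e.symm G₁, e.symm G₂, ?_, e.symm.lt_iff_lt.2 h₂, e.symm_apply_lt.2 h₃⟩
  have hmap : e ⟨R ∩ Q, inter_mem_corona hR hQ hQc⟩ =
      ⟨_, inter_mem_corona hR' hQ' (e ⟨Q, hQc⟩).2⟩ :=
    Subtype.ext (coe_map_inter e hR hQ hRc hQc)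
  rwa [e.lt_symm_apply, hmap]

theorem tileDist_map_le (he : IsCenteredIso T k P P' e) (hP' : P' ∈ T.tiles) (hjk : j ≤ k)
    (hQc : Q ∈ corona T k P) (hQ : tileDist T P Q ≤ j) :
    tileDist T P' (e ⟨Q, hQc⟩) ≤ j := by
  induction j generalizing Q with
  | zero =>
    obtain ⟨rfl, -⟩ := tileDist_le_zero_iff.1 hQ
    rw [he hQc (mem_corona_self hP')]
    exact tileDist_le_zero_iff.2 ⟨rfl, hP'⟩
  | succ j ih =>
    rcases tileDist_le_succ_iff.1 hQ with hQj | ⟨hQt, R, hR, hRQ⟩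
    · exact (ih (by omega) hQc hQj).trans (by exact_mod_cast j.le_succ)
    · have hRt := mem_tiles_of_tileDist_le hR
      have hRc : R ∈ corona T k P :=
        (mem_corona_iff_of_mem_tiles hRt).2 (hR.trans (by exact_mod_cast (by omega : j ≤ k)))
      exact tileDist_le_succ_iff.2 <| Or.inr ⟨mem_tiles_map e hQt hQc, _,
        ih (by omega) hRc hR, le_fdimZ_inter_map e hRt hQt hRc hQc hRQ⟩

theorem map_mem_corona_of_le (he : IsCenteredIso T k P P' e) (hP' : P' ∈ T.tiles)
    (hjk : j ≤ k) (hFj : F ∈ corona T j P) (hFk : F ∈ corona T k P) :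
    (e ⟨F, hFk⟩ : Set (EucSp d)) ∈ corona T j P' := by
  obtain ⟨Q, hQ, hQj, hFQ⟩ := hFj
  have hQc : Q ∈ corona T k P :=
    (mem_corona_iff_of_mem_tiles hQ).2 (hQj.trans (by exact_mod_cast hjk))
  have hQ' := mem_tiles_map e hQ hQc
  refine ⟨_, hQ', tileDist_map_le e he hP' hjk hQc hQj, isFaceOf_of_mem_corona (e _).2 hQ' ?_⟩
  exact e.monotone (show (⟨F, hFk⟩ : corona T k P) ≤ ⟨Q, hQc⟩ from hFQ.subset)

variable {e} in
theorem IsCenteredIso.symm (he : IsCenteredIso T k P P' e) : IsCenteredIso T k P' P e.symm :=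
  fun hP' hP => by rw [← he hP hP', OrderIso.symm_apply_apply]

end CoronaIso

theorem OrderIso.exists_restrict {α : Type*} [LE α] {S S' A A' : Set α} (e : S ≃o S')
    (hA : A ⊆ S) (hA' : A' ⊆ S') (h : ∀ x (hx : x ∈ A), (e ⟨x, hA hx⟩ : α) ∈ A')
    (h' : ∀ y (hy : y ∈ A'), (e.symm ⟨y, hA' hy⟩ : α) ∈ A) :
    ∃ f : A ≃o A', ∀ x (hx : x ∈ A), (f ⟨x, hx⟩ : α) = e ⟨x, hA hx⟩ :=
  ⟨{ toFun := fun x => ⟨e ⟨x, hA x.2⟩, h x x.2⟩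
     invFun := fun y => ⟨e.symm ⟨y, hA' y.2⟩, h' y y.2⟩
     left_inv := fun x => by simp
     right_inv := fun y => by simp
     map_rel_iff' := by simp }, fun _ _ => rfl⟩

theorem CoronasIsomorphic.of_le {T : Tiling d} {j k : ℕ} {P P' : Set (EucSp d)}
    (hP : P ∈ T.tiles) (hP' : P' ∈ T.tiles) (hjk : j ≤ k) (h : CoronasIsomorphic T k P P') :
    CoronasIsomorphic T j P P' := by
  obtain ⟨e, he⟩ := h
  obtain ⟨f, hf⟩ := e.exists_restrict (corona_mono hjk) (corona_mono hjk)
    (fun F hF => map_mem_corona_of_le e he hP' hjk hF _)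
    (fun F hF => map_mem_corona_of_le e.symm he.symm hP hjk hF _)
  exact ⟨f, fun hPj hP'j => Subtype.ext <| (hf P hPj).trans <|
    congrArg Subtype.val (he (corona_mono hjk hPj) (corona_mono hjk hP'j))⟩

theorem Cardinal.mk_quot_le_of_imp {α : Type*} {r s : α → α → Prop}
    (h : ∀ a b, r a b → s a b) : Cardinal.mk (Quot s) ≤ Cardinal.mk (Quot r) :=
  Cardinal.mk_le_of_surjective (f := Quot.factor r s h) (Quot.ind fun a => ⟨Quot.mk r a, rfl⟩)

theorem coronasIsomorphic_mono_general (d : ℕ) (T : Tiling d) (k : ℕ) :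
    (∀ P ∈ T.tiles, ∀ P' ∈ T.tiles,
      CoronasIsomorphic T k P P' → CoronasIsomorphic T (k - 1) P P') ∧
    Ncount T (k - 1) ≤ Ncount T k := by
  have hmono : ∀ P ∈ T.tiles, ∀ P' ∈ T.tiles,
      CoronasIsomorphic T k P P' → CoronasIsomorphic T (k - 1) P P' :=
    fun P hP P' hP' => CoronasIsomorphic.of_le hP hP' (Nat.sub_le k 1)
  exact ⟨hmono, Cardinal.mk_quot_le_of_imp fun P P' => hmono P P.2 P' P'.2⟩

/-- If the centered `k`-th coronas of two tiles are isomorphic then so are their centered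
`(k-1)`-st coronas; consequently `N_{k-1}(T) ≤ N_k(T)`. -/
theorem coronasIsomorphic_mono (d : ℕ) (T : Tiling d) (k : ℕ) (hk : 1 ≤ k) :
    (∀ P ∈ T.tiles, ∀ P' ∈ T.tiles,
      CoronasIsomorphic T k P P' → CoronasIsomorphic T (k - 1) P P') ∧
    Ncount T (k - 1) ≤ Ncount T k :=
  coronasIsomorphic_mono_general d T k

end
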